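/- Let {β_i = U e_i} be any orthonormal basis of ℂ^N obtained by a unitary U. Projecting the first factor of |S_N⟩ onto β_i yields (up to phase and normalization) β_i ⊗ |S_{N−1}(β; β_i)⟩, where |S_{N−1}(β; β_i)⟩ is the (N−1)-singlet built from the basis vectors {β_l : l ≠ i}. In particular each outcome has probability 1/N and the post-measurement state of the unmeasured parties is a singlet regardless of the choice of U. -/

import Mathlib

/-- The `N`-level singlet `(1/√N!) Σ_{σ∈S_N} sgn(σ) e_{σ(1)} ⊗ ⋯ ⊗ e_{σ(N)}`. -/
noncomputable def singlet (N : ℕ) : EuclideanSpace ℂ (Fin N → Fin N) :=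
  ((Real.sqrt N.factorial : ℂ))⁻¹ • ∑ σ : Equiv.Perm (Fin N),
    ((Equiv.Perm.sign σ : ℤ) : ℂ) • EuclideanSpace.single (⇑σ) (1 : ℂ)

/-- The order-preserving enumeration of `{1,…,N} ∖ {i}` by `Fin (N-1)`. -/
noncomputable def missing {N : ℕ} (i : Fin N) : Fin (N - 1) → Fin N :=
  fun j => (Finset.univ.erase i).orderEmbOfFin
    (by simp [Finset.card_erase_of_mem]) j

/-- The `(N−1)`-party singlet `|S_{N−1}(β; β_i)⟩` built from the basis vectors
`{β_l : l ≠ i}`, where `β_l` is the `l`-th column of the matrix `U`: the normalized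
antisymmetrization `(1/√(N−1)!) Σ_τ sgn(τ) β_{m(τ 1)} ⊗ ⋯ ⊗ β_{m(τ (N−1))}`, with
`m` enumerating `{1,…,N} ∖ {i}`. -/
noncomputable def subSingletOfBasis {N : ℕ} (U : Matrix (Fin N) (Fin N) ℂ)
    (i : Fin N) : EuclideanSpace ℂ (Fin (N - 1) → Fin N) :=
  ((Real.sqrt (N - 1).factorial : ℂ))⁻¹ • ∑ τ : Equiv.Perm (Fin (N - 1)),
    ((Equiv.Perm.sign τ : ℤ) : ℂ) •
      (WithLp.toLp 2 (fun g : Fin (N - 1) → Fin N => ∏ j, U (g j) (missing i (τ j))) :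
        EuclideanSpace ℂ (Fin (N - 1) → Fin N))

/-- The product state `β ⊗ χ` in `(ℂ^N)^{⊗N}`, with the vector `β` on the first
factor and `χ` on the remaining factors. -/
noncomputable def prodStateVec {N : ℕ} (hN : 0 < N) (β : EuclideanSpace ℂ (Fin N))
    (χ : EuclideanSpace ℂ (Fin (N - 1) → Fin N)) :
    EuclideanSpace ℂ (Fin N → Fin N) :=
  WithLp.toLp 2 (fun f => β (f ⟨0, hN⟩) * χ (fun j => f ⟨j.1 + 1, by have := j.2; omega⟩))

/-- The projection `|β⟩⟨β| ⊗ I^{⊗(N−1)}` applied to `ψ`. -/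
noncomputable def projFirstVec {d N : ℕ} (hN : 0 < N) (β : EuclideanSpace ℂ (Fin d))
    (ψ : EuclideanSpace ℂ (Fin N → Fin d)) : EuclideanSpace ℂ (Fin N → Fin d) :=
  WithLp.toLp 2 (fun f => β (f ⟨0, hN⟩) *
    ∑ a : Fin d, (starRingEnd ℂ) (β a) * ψ (Function.update f ⟨0, hN⟩ a))

/-!
The singlet is the determinant tensor: `det M * S_N(g) = det (M.submatrix g id) / √N!` for every
matrix `M`. Taking `M = U`, contracting the first factor with `β_i` replaces the first row of
`U.submatrix g id` by `β_iᴴ U = e_i`, and Laplace expansion along that row leaves `(-1)^i` times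
the minor of `U` with rows `g 1, …, g (N-1)` and columns `≠ i`, which is `√(N-1)!` times the
coefficient of `S_{N-1}(β; β_i)` at `g`. So the projection is `c • β_i ⊗ S_{N-1}(β; β_i)` with
`c = (-1)^i / (det U * √N)`, and `|c| = 1/√N` since `|det U| = 1`. The product vectors
`β_{m(τ 1)} ⊗ ⋯ ⊗ β_{m(τ (N-1))}` are orthonormal, so `S_{N-1}(β; β_i)` is a unit vector and the
outcome has probability `|c|² = 1/N`.
-/

open Matrix Finset Function

namespace Matrix

variable {R : Type*} [CommRing R] [StarRing R] {ι κ : Type*} [Fintype ι]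

theorem sum_star_mul_eq_ite_of_conjTranspose_mul_self [DecidableEq κ] {U : Matrix ι κ R}
    (hU : Uᴴ * U = 1) (a b : κ) :
    ∑ x, star (U x a) * U x b = if a = b then 1 else 0 := by
  simpa [mul_apply, one_apply] using congr_fun₂ hU a b

theorem sum_prod_star_mul_eq_ite_of_conjTranspose_mul_self {m : Type*} [Fintype m]
    [DecidableEq m] [DecidableEq κ] {U : Matrix ι κ R} (hU : Uᴴ * U = 1) (a b : m → κ) :
    ∑ h : m → ι, ∏ j, star (U (h j) (a j)) * U (h j) (b j) = if a = b then 1 else 0 := by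
  rw [← Fintype.prod_sum (fun j x => star (U x (a j)) * U x (b j))]
  simp_rw [sum_star_mul_eq_ite_of_conjTranspose_mul_self hU, prod_boole, funext_iff]
  simp

theorem sum_star_mul_det_submatrix_cons {n : ℕ} {U : Matrix (Fin (n + 1)) (Fin (n + 1)) R}
    (hU : Uᴴ * U = 1) (i : Fin (n + 1)) (h : Fin n → Fin (n + 1)) :
    ∑ a, star (U a i) * (U.submatrix (Fin.cons a h) id).det =
      (-1) ^ (i : ℕ) * (U.submatrix h i.succAbove).det := by
  simp_rw [det_succ_row_zero, submatrix_submatrix, mul_sum]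
  rw [sum_comm]
  simp only [submatrix_apply, Fin.cons_zero, id_comp, id_eq, Fin.cons_comp_succ]
  have hrow : ∀ k : Fin (n + 1), ∑ a, star (U a i) * ((-1) ^ (k : ℕ) * U a k *
      (U.submatrix h k.succAbove).det) =
        (-1) ^ (k : ℕ) * (U.submatrix h k.succAbove).det * if i = k then 1 else 0 := fun k => by
    rw [← sum_star_mul_eq_ite_of_conjTranspose_mul_self hU i k, mul_sum]
    exact sum_congr rfl fun a _ => by ring
  simp [hrow]

theorem sum_star_det_mul_det_submatrix [DecidableEq κ] {U : Matrix ι κ R} (hU : Uᴴ * U = 1)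
    {n : ℕ} {e : Fin n → κ} (he : Injective e) :
    ∑ h : Fin n → ι, star (U.submatrix h e).det * (U.submatrix h e).det = n.factorial := by
  have expand : ∀ h : Fin n → ι, star (U.submatrix h e).det * (U.submatrix h e).det =
      ∑ σ : Equiv.Perm (Fin n), ∑ τ : Equiv.Perm (Fin n),
        ((Equiv.Perm.sign σ : ℤ) : R) * (Equiv.Perm.sign τ : ℤ) *
          ∏ j, star (U (h j) (e (σ j))) * U (h j) (e (τ j)) := by
    intro h
    rw [← det_conjTranspose, ← det_transpose (U.submatrix h e), det_apply', det_apply',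
      sum_mul_sum]
    refine sum_congr rfl fun σ _ => sum_congr rfl fun τ _ => ?_
    simp only [conjTranspose_apply, transpose_apply, submatrix_apply, prod_mul_distrib]
    ring
  have orth : ∀ σ τ : Equiv.Perm (Fin n), (e ∘ σ = e ∘ τ) ↔ σ = τ := fun σ τ =>
    he.comp_left.eq_iff.trans DFunLike.coe_fn_eq
  have gram : ∀ σ τ : Equiv.Perm (Fin n),
      ∑ h : Fin n → ι, ∏ j, star (U (h j) (e (σ j))) * U (h j) (e (τ j)) =
        if σ = τ then 1 else 0 := fun σ τ => by
    simpa [orth] using sum_prod_star_mul_eq_ite_of_conjTranspose_mul_self hU (e ∘ σ) (e ∘ τ)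
  simp_rw [expand]
  rw [sum_comm]
  simp_rw [sum_comm (γ := Fin n → ι), ← mul_sum, gram]
  simp [← Int.cast_mul, ← Units.val_mul, Fintype.card_perm]

theorem norm_col_eq_one_of_conjTranspose_mul_self [DecidableEq κ]
    {U : Matrix ι κ ℂ} (hU : Uᴴ * U = 1) (i : κ) :
    ‖(WithLp.toLp 2 (fun x => U x i) : EuclideanSpace ℂ ι)‖ = 1 := by
  have h := sum_star_mul_eq_ite_of_conjTranspose_mul_self hU i i
  simp only [Complex.star_def, Complex.conj_mul', if_pos] at h
  rw [← sq_eq_sq₀ (norm_nonneg _) zero_le_one, one_pow, EuclideanSpace.norm_sq_eq]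
  exact_mod_cast h

end Matrix

theorem Real.sqrt_factorial_succ (n : ℕ) :
    Real.sqrt (n + 1).factorial = Real.sqrt (n + 1 : ℕ) * Real.sqrt n.factorial := by
  rw [Nat.factorial_succ, Nat.cast_mul, Real.sqrt_mul (Nat.cast_nonneg _)]

theorem singlet_apply (N : ℕ) (g : Fin N → Fin N) :
    singlet N g = (Real.sqrt N.factorial : ℂ)⁻¹ *
      ∑ σ : Equiv.Perm (Fin N), ((Equiv.Perm.sign σ : ℤ) : ℂ) * if g = ⇑σ then 1 else 0 := by
  simp [singlet, Pi.single_apply]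

theorem det_mul_singlet_apply {N : ℕ} (M : Matrix (Fin N) (Fin N) ℂ) (g : Fin N → Fin N) :
    M.det * singlet N g = (Real.sqrt N.factorial : ℂ)⁻¹ * (M.submatrix g id).det := by
  rw [singlet_apply]
  by_cases hg : Injective g
  · set σ := Equiv.ofBijective g (Finite.injective_iff_bijective.mp hg)
    have hσ : g = ⇑σ := rfl
    rw [sum_eq_single σ (fun τ _ hτ => by simp [hσ, Ne.symm hτ]) (by simp), hσ, det_permute]
    simp only [if_true]
    ring
  · obtain ⟨a, b, hab, hne⟩ : ∃ a b, g a = g b ∧ a ≠ b := by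
      simpa [Injective, and_comm] using hg
    have hnotperm : ∀ σ : Equiv.Perm (Fin N), g ≠ ⇑σ := fun σ hσ =>
      hne (σ.injective (hσ ▸ hab))
    rw [det_zero_of_row_eq (M := M.submatrix g id) hne (by ext j; simp [hab])]
    simp [hnotperm]

theorem missing_eq_succAbove {n : ℕ} (i : Fin (n + 1)) : missing i = i.succAbove :=
  (Finset.orderEmbOfFin_unique _ (fun x => by simp [Fin.succAbove_ne])
    (Fin.strictMono_succAbove i)).symm

theorem subSingletOfBasis_apply {n : ℕ} (U : Matrix (Fin (n + 1)) (Fin (n + 1)) ℂ)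
    (i : Fin (n + 1)) (h : Fin n → Fin (n + 1)) :
    subSingletOfBasis U i h = (Real.sqrt n.factorial : ℂ)⁻¹ * (U.submatrix h i.succAbove).det := by
  rw [← det_transpose, det_apply']
  simp [subSingletOfBasis, missing_eq_succAbove]

theorem norm_subSingletOfBasis {n : ℕ} {U : Matrix (Fin (n + 1)) (Fin (n + 1)) ℂ}
    (hU : Uᴴ * U = 1) (i : Fin (n + 1)) : ‖subSingletOfBasis U i‖ = 1 := by
  have h := sum_star_det_mul_det_submatrix hU (Fin.succAbove_right_injective (p := i))
  simp only [Complex.star_def, Complex.conj_mul'] at h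
  replace h : ∑ h, ‖(U.submatrix h i.succAbove).det‖ ^ 2 = (n.factorial : ℝ) := by
    exact_mod_cast h
  have hfact : (0 : ℝ) < n.factorial := by positivity
  rw [← sq_eq_sq₀ (norm_nonneg _) zero_le_one, one_pow, EuclideanSpace.norm_sq_eq]
  simp only [subSingletOfBasis_apply, norm_mul, mul_pow, ← mul_sum, norm_inv, Complex.norm_real,
    Real.norm_eq_abs, sq_abs, inv_pow, Real.sq_sqrt hfact.le]
  change _ * ∑ h : Fin n → Fin (n + 1), _ = _
  rw [h, inv_mul_cancel₀ hfact.ne']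

theorem prodStateVec_apply {n : ℕ} (hN : 0 < n + 1) (β : EuclideanSpace ℂ (Fin (n + 1)))
    (χ : EuclideanSpace ℂ (Fin n → Fin (n + 1))) (f : Fin (n + 1) → Fin (n + 1)) :
    prodStateVec hN β χ f = β (f 0) * χ (Fin.tail f) :=
  rfl

theorem norm_prodStateVec {N : ℕ} (hN : 0 < N) (β : EuclideanSpace ℂ (Fin N))
    (χ : EuclideanSpace ℂ (Fin (N - 1) → Fin N)) :
    ‖prodStateVec hN β χ‖ = ‖β‖ * ‖χ‖ := by
  obtain ⟨n, rfl⟩ : ∃ n, N = n + 1 := ⟨N - 1, by omega⟩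
  rw [← sq_eq_sq₀ (norm_nonneg _) (by positivity), mul_pow, EuclideanSpace.norm_sq_eq,
    EuclideanSpace.norm_sq_eq, EuclideanSpace.norm_sq_eq, sum_mul_sum,
    ← (Fin.consEquiv fun _ => Fin (n + 1)).sum_comp, Fintype.sum_prod_type]
  simp [Fin.consEquiv, prodStateVec_apply, mul_pow]

theorem det_mul_projFirstVec_singlet_apply {n : ℕ} (hN : 0 < n + 1)
    {U : Matrix (Fin (n + 1)) (Fin (n + 1)) ℂ} (hU : Uᴴ * U = 1) (i : Fin (n + 1))
    (f : Fin (n + 1) → Fin (n + 1)) :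
    U.det * projFirstVec hN (WithLp.toLp 2 (fun x => U x i)) (singlet (n + 1)) f =
      (-1) ^ (i : ℕ) * (Real.sqrt (n + 1).factorial : ℂ)⁻¹ *
        (U (f 0) i * (U.submatrix (Fin.tail f) i.succAbove).det) := by
  have hupdate : ∀ a, update f 0 a = Fin.cons a (Fin.tail f) := fun a => by
    rw [← Fin.update_cons_zero (f 0), Fin.cons_self_tail]
  calc U.det * projFirstVec hN (WithLp.toLp 2 (fun x => U x i)) (singlet (n + 1)) f
      = U (f 0) i * ∑ a, star (U a i) * (U.det * singlet (n + 1) (Fin.cons a (Fin.tail f))) := by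
        simp only [projFirstVec, Fin.zero_eta, hupdate, mul_sum, starRingEnd_apply]
        exact sum_congr rfl fun a _ => by ring
    _ = U (f 0) i * ((Real.sqrt (n + 1).factorial : ℂ)⁻¹ *
          ∑ a, star (U a i) * (U.submatrix (Fin.cons a (Fin.tail f)) id).det) := by
        simp_rw [det_mul_singlet_apply, mul_sum, mul_left_comm]
    _ = _ := by rw [sum_star_mul_det_submatrix_cons hU]; ring

/-- For any orthonormal basis `{β_i = U e_i}` given by a unitary `U`,
projecting the first factor of `|S_N⟩` onto `β_i` yields, up to a phase and
normalization, `β_i ⊗ |S_{N−1}(β; β_i)⟩`; each outcome has probability `1/N`,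
regardless of the choice of `U`. -/
theorem singlet_projection_arbitrary_basis {N : ℕ} (hN : 0 < N)
    (U : Matrix (Fin N) (Fin N) ℂ) (hU : U ∈ Matrix.unitaryGroup (Fin N) ℂ)
    (i : Fin N) :
    (∃ c : ℂ, ‖c‖ = (Real.sqrt N)⁻¹ ∧
      projFirstVec hN (WithLp.toLp 2 (fun x => U x i)) (singlet N) =
        c • prodStateVec hN (WithLp.toLp 2 (fun x => U x i)) (subSingletOfBasis U i)) ∧
    ‖projFirstVec hN (WithLp.toLp 2 (fun x => U x i)) (singlet N)‖ ^ 2 = (N : ℝ)⁻¹ := by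
  obtain ⟨n, rfl⟩ : ∃ n, N = n + 1 := ⟨N - 1, by omega⟩
  have hUU : Uᴴ * U = 1 := hU.1
  have hdet : ‖U.det‖ = 1 := CStarRing.norm_of_mem_unitary (det_of_mem_unitary hU)
  have hdet0 : U.det ≠ 0 := norm_ne_zero_iff.mp (hdet ▸ one_ne_zero)
  set c : ℂ := (U.det)⁻¹ * (-1) ^ (i : ℕ) * (Real.sqrt (n + 1 : ℕ) : ℂ)⁻¹
  have hc : ‖c‖ = (Real.sqrt (n + 1 : ℕ))⁻¹ := by simp [c, hdet]
  have hproj : projFirstVec hN (WithLp.toLp 2 (fun x => U x i)) (singlet (n + 1)) =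
      c • prodStateVec hN (WithLp.toLp 2 (fun x => U x i)) (subSingletOfBasis U i) := by
    ext f
    apply mul_left_cancel₀ hdet0
    rw [det_mul_projFirstVec_singlet_apply hN hUU, PiLp.smul_apply, prodStateVec_apply,
      subSingletOfBasis_apply, Real.sqrt_factorial_succ]
    simp only [c, smul_eq_mul]
    push_cast
    field_simp
  refine ⟨⟨c, hc, hproj⟩, ?_⟩
  rw [hproj, norm_smul, norm_prodStateVec, norm_col_eq_one_of_conjTranspose_mul_self hUU,
    norm_subSingletOfBasis hUU, hc, mul_one, mul_one, inv_pow, Real.sq_sqrt (Nat.cast_nonneg _)]
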